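/- Let 𝒵 be a nonempty finite type, let φ, ψ be probability measures on 𝒵 with φ absolutely continuous with respect to ψ, let (𝒵₀, Π₀) be a probability space, let loss : 𝒵₀ × 𝒵 → (0,1) be measurable, let M ≥ 2 be an integer, and let Z₀^(1),…,Z₀^(M) ∈ 𝒵₀ be fixed. Then, writing R_M = (1/M)·Σ_{v=1}^M E_{Ẑ∼φ}[loss(Z₀^(v), Ẑ)] and R₀ = E_{Z₀∼Π₀} E_{Ẑ∼φ}[loss(Z₀, Ẑ)], and assuming R_M ∈ (0,1), we have the deterministic inequality M·kl(R_M ‖ R₀) ≤ KL(φ‖ψ) + log E_{Ẑ∼ψ}[ exp( M·kl( (1/M)·Σ_{v=1}^M loss(Z₀^(v), Ẑ) ‖ E_{Z₀∼Π₀}[loss(Z₀, Ẑ)] ) ) ]. -/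

import Mathlib

open MeasureTheory

/-- Binary Kullback–Leibler divergence `kl(a‖b)`. -/
noncomputable def klBin (a b : ℝ) : ℝ :=
  a * Real.log (a / b) + (1 - a) * Real.log ((1 - a) / (1 - b))

open Real Finset

/-! Jensen's inequality for `kl` and the change of measure both come from the pointwise bound
`a log c + a - c b ≤ a log (a / b)`, which is `log x ≤ x - 1`. Summed with a constant `c` it is
the log-sum inequality, hence the joint convexity of `klBin` that moves the average over `φ`
inside `kl`; summed with `c ∝ exp f` it is the change of measure
`E_φ f ≤ KL(φ‖ψ) + log E_ψ exp f`, which is applied to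
`f = M · kl(empirical loss ‖ mean loss)`. -/

noncomputable def finKL {ι : Type*} [Fintype ι] (p q : ι → ℝ) : ℝ :=
  ∑ i, p i * log (p i / q i)

lemma mul_log_add_sub_le_mul_log_div {a b c : ℝ} (ha : 0 ≤ a) (hb : 0 ≤ b) (hc : 0 < c)
    (hab : b = 0 → a = 0) : a * log c + a - c * b ≤ a * log (a / b) := by
  rcases ha.eq_or_lt with rfl | ha
  · simpa using mul_nonneg hc.le hb
  have hb : 0 < b := hb.lt_of_ne fun h => ha.ne' (hab h.symm)
  have key := one_sub_inv_le_log_of_pos (show 0 < a / (c * b) by positivity)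
  rw [inv_div, log_div ha.ne' (by positivity), log_mul hc.ne' hb.ne'] at key
  rw [log_div ha.ne' hb.ne']
  have := mul_le_mul_of_nonneg_left key ha.le
  rw [mul_sub, mul_one, mul_div_cancel₀ _ ha.ne'] at this
  linarith

section FiniteSums

variable {ι : Type*} [Fintype ι]

lemma sum_pos_of_absolutelyContinuous {a b : ι → ℝ} (hb : ∀ i, 0 ≤ b i)
    (hab : ∀ i, b i = 0 → a i = 0) (hA : 0 < ∑ i, a i) : 0 < ∑ i, b i :=
  (sum_nonneg fun i _ => hb i).lt_of_ne fun hB => hA.ne' <| sum_eq_zero fun i hi =>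
    hab i ((sum_eq_zero_iff_of_nonneg fun i _ => hb i).1 hB.symm i hi)

lemma sum_mul_log_add_sub_le_finKL {p q g : ι → ℝ} (hp : ∀ i, 0 ≤ p i)
    (hq : ∀ i, 0 ≤ q i) (hpq : ∀ i, q i = 0 → p i = 0) (hg : ∀ i, 0 < g i) :
    ∑ i, p i * log (g i) + ∑ i, p i - ∑ i, g i * q i ≤ finKL p q := by
  simpa only [finKL, sum_add_distrib, sum_sub_distrib] using
    sum_le_sum fun i _ => mul_log_add_sub_le_mul_log_div (hp i) (hq i) (hg i) (hpq i)

/-- The log-sum inequality. -/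
theorem sum_mul_log_sum_div_sum_le_finKL {a b : ι → ℝ} (ha : ∀ i, 0 ≤ a i)
    (hb : ∀ i, 0 ≤ b i) (hab : ∀ i, b i = 0 → a i = 0) :
    (∑ i, a i) * log ((∑ i, a i) / ∑ i, b i) ≤ finKL a b := by
  rcases (sum_nonneg fun i _ => ha i).eq_or_lt with hA | hA
  · have ha0 : ∀ i, a i = 0 := fun i =>
      (sum_eq_zero_iff_of_nonneg fun i _ => ha i).1 hA.symm i (mem_univ i)
    simp [finKL, ha0]
  have hB := sum_pos_of_absolutelyContinuous hb hab hA
  have := sum_mul_log_add_sub_le_finKL ha hb hab fun _ => div_pos hA hB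
  rwa [← sum_mul, ← mul_sum, div_mul_cancel₀ _ hB.ne', add_sub_cancel_right] at this

/-- Joint convexity of `(u, v) ↦ u log (u / v)`. -/
lemma sum_mul_log_sum_mul_div_le {p u v : ι → ℝ} (hp : ∀ i, 0 ≤ p i)
    (hu : ∀ i, 0 ≤ u i) (hv : ∀ i, 0 < v i) :
    (∑ i, p i * u i) * log ((∑ i, p i * u i) / ∑ i, p i * v i)
      ≤ ∑ i, p i * (u i * log (u i / v i)) := by
  refine (sum_mul_log_sum_div_sum_le_finKL (fun i => mul_nonneg (hp i) (hu i))
    (fun i => mul_nonneg (hp i) (hv i).le) fun i h => ?_).trans_eq (sum_congr rfl fun i _ => ?_)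
  · simp [(mul_eq_zero.1 h).resolve_right (hv i).ne']
  · rcases (hp i).eq_or_lt with h | h
    · simp [← h]
    · rw [mul_div_mul_left _ _ h.ne', mul_assoc]

theorem klBin_sum_mul_le_sum_mul_klBin {p r s : ι → ℝ} (hp : ∀ i, 0 ≤ p i)
    (hp1 : ∑ i, p i = 1) (hr : ∀ i, r i ∈ Set.Icc 0 1) (hs : ∀ i, s i ∈ Set.Ioo 0 1) :
    klBin (∑ i, p i * r i) (∑ i, p i * s i) ≤ ∑ i, p i * klBin (r i) (s i) := by
  have hcompl : ∀ t : ι → ℝ, ∑ i, p i * (1 - t i) = 1 - ∑ i, p i * t i := fun t => by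
    simp only [mul_sub, mul_one, sum_sub_distrib, hp1]
  have h₁ := sum_mul_log_sum_mul_div_le hp (fun i => (hr i).1) fun i => (hs i).1
  have h₂ := sum_mul_log_sum_mul_div_le hp (fun i => sub_nonneg.2 (hr i).2)
    fun i => sub_pos.2 (hs i).2
  rw [hcompl, hcompl] at h₂
  simpa only [klBin, mul_add, sum_add_distrib] using add_le_add h₁ h₂

/-- Change of measure (finite Donsker–Varadhan inequality). -/
theorem sum_mul_le_finKL_add_log_sum_mul_exp {p q : ι → ℝ} (f : ι → ℝ)
    (hp : ∀ i, 0 ≤ p i) (hp1 : ∑ i, p i = 1) (hq : ∀ i, 0 ≤ q i)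
    (hpq : ∀ i, q i = 0 → p i = 0) :
    ∑ i, p i * f i ≤ finKL p q + log (∑ i, q i * exp (f i)) := by
  set S := ∑ i, q i * exp (f i)
  have hS : 0 < S := sum_pos_of_absolutelyContinuous (fun i => mul_nonneg (hq i) (exp_pos _).le)
    (fun i h => hpq i ((mul_eq_zero.1 h).resolve_right (exp_pos _).ne')) (hp1 ▸ one_pos)
  have := sum_mul_log_add_sub_le_finKL hp hq hpq fun i => div_pos (exp_pos (f i)) hS
  have hsum : ∑ i, exp (f i) / S * q i = 1 := by
    rw [← div_self hS.ne', sum_div]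
    exact sum_congr rfl fun i _ => by ring
  simp only [log_div (exp_pos _).ne' hS.ne', log_exp, mul_sub, sum_sub_distrib, ← sum_mul,
    hp1, hsum] at this
  linarith

end FiniteSums

lemma one_div_mul_sum_mem_Icc {n : ℕ} {x : Fin n → ℝ} (hx : ∀ v, x v ∈ Set.Icc 0 1) :
    1 / (n : ℝ) * ∑ v, x v ∈ Set.Icc 0 1 := by
  have hsum : ∑ v, x v ≤ n := by simpa using sum_le_sum fun v (_ : v ∈ univ) => (hx v).2
  rw [one_div_mul_eq_div]
  exact ⟨div_nonneg (sum_nonneg fun v _ => (hx v).1) n.cast_nonneg,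
    div_le_one_of_le₀ hsum n.cast_nonneg⟩

section Integral

variable {α : Type*} [MeasurableSpace α] {μ : Measure α}

lemma integral_pos_of_forall_pos [NeZero μ] {f : α → ℝ} (hf : Integrable f μ)
    (hpos : ∀ x, 0 < f x) : 0 < ∫ x, f x ∂μ := by
  rw [integral_pos_iff_support_of_nonneg (fun x => (hpos x).le) hf,
    Function.support_eq_univ fun x => (hpos x).ne']
  simp [NeZero.ne μ]

lemma integral_mem_Ioo [IsProbabilityMeasure μ] {f : α → ℝ} (hf : Integrable f μ) {a b : ℝ}
    (h : ∀ x, f x ∈ Set.Ioo a b) : ∫ x, f x ∂μ ∈ Set.Ioo a b := by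
  have ha := integral_pos_of_forall_pos (f := fun x => f x - a) (hf.sub (integrable_const a))
    fun x => sub_pos.2 (h x).1
  have hb := integral_pos_of_forall_pos (f := fun x => b - f x) ((integrable_const b).sub hf)
    fun x => sub_pos.2 (h x).2
  rw [integral_sub hf (integrable_const a)] at ha
  rw [integral_sub (integrable_const b) hf] at hb
  constructor <;> simp_all

end Integral

theorem pacBayes_change_of_measure_general
    {Z : Type*} [Fintype Z]
    (φ ψ : Z → ℝ)
    (hφ0 : ∀ z, 0 ≤ φ z) (hφ1 : ∑ z, φ z = 1)
    (hψ0 : ∀ z, 0 ≤ ψ z)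
    (hac : ∀ z, ψ z = 0 → φ z = 0)
    {Z0 : Type*} [MeasurableSpace Z0]
    (μ₀ : Measure Z0) [IsProbabilityMeasure μ₀]
    (loss : Z0 → Z → ℝ)
    (hloss_meas : ∀ z, Measurable fun z0 => loss z0 z)
    (hloss : ∀ z0 z, loss z0 z ∈ Set.Ioo (0 : ℝ) 1)
    (M : ℕ)
    (Zv : Fin M → Z0) :
    (M : ℝ) * klBin ((1 / (M : ℝ)) * ∑ v, ∑ z, φ z * loss (Zv v) z)
        (∫ z0, ∑ z, φ z * loss z0 z ∂μ₀)
      ≤ (∑ z, φ z * Real.log (φ z / ψ z))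
        + Real.log (∑ z, ψ z *
            Real.exp ((M : ℝ) *
              klBin ((1 / (M : ℝ)) * ∑ v, loss (Zv v) z) (∫ z0, loss z0 z ∂μ₀))) := by
  set r : Z → ℝ := fun z => (1 / (M : ℝ)) * ∑ v, loss (Zv v) z
  set s : Z → ℝ := fun z => ∫ z0, loss z0 z ∂μ₀
  have hint : ∀ z, Integrable (fun z0 => loss z0 z) μ₀ := fun z =>
    .of_mem_Icc 0 1 (hloss_meas z).aemeasurable
      (ae_of_all _ fun z0 => Set.Ioo_subset_Icc_self (hloss z0 z))
  have hr : ∀ z, r z ∈ Set.Icc 0 1 := fun z =>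
    one_div_mul_sum_mem_Icc fun v => Set.Ioo_subset_Icc_self (hloss (Zv v) z)
  have hs : ∀ z, s z ∈ Set.Ioo 0 1 := fun z => integral_mem_Ioo (hint z) (hloss · z)
  have hRM : (1 / (M : ℝ)) * ∑ v, ∑ z, φ z * loss (Zv v) z = ∑ z, φ z * r z := by
    simp only [r, sum_comm (γ := Fin M), mul_sum]
    exact sum_congr rfl fun z _ => sum_congr rfl fun v _ => by ring
  have hR0 : ∫ z0, ∑ z, φ z * loss z0 z ∂μ₀ = ∑ z, φ z * s z := by
    simp only [s, integral_finsetSum _ fun z _ => (hint z).const_mul (φ z), integral_const_mul]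
  rw [hRM, hR0]
  calc (M : ℝ) * klBin (∑ z, φ z * r z) (∑ z, φ z * s z)
      ≤ M * ∑ z, φ z * klBin (r z) (s z) := by
        gcongr
        exact klBin_sum_mul_le_sum_mul_klBin hφ0 hφ1 hr hs
    _ = ∑ z, φ z * (M * klBin (r z) (s z)) := by
        simp only [mul_sum, mul_left_comm]
    _ ≤ _ := sum_mul_le_finKL_add_log_sum_mul_exp _ hφ0 hφ1 hψ0 hac

/-- Step 1 of the PAC-Bayes argument (Jensen + change of measure), as a
deterministic inequality: for probability mass functions `φ ≪ ψ` on a nonempty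
finite type `𝒵`, a probability space `(𝒵₀, μ₀)`, a measurable loss with values in
`(0,1)`, `M ≥ 2`, and fixed `Z₀^(1), …, Z₀^(M)` with empirical risk
`R_M ∈ (0,1)`, one has
`M · kl(R_M ‖ R₀) ≤ KL(φ‖ψ) + log E_{Ẑ∼ψ} exp( M · kl( (1/M) ∑_v loss(Z₀^(v), Ẑ) ‖ E_{Z₀∼μ₀} loss(Z₀, Ẑ) ) )`. -/
theorem pacBayes_change_of_measure
    {Z : Type*} [Fintype Z] [Nonempty Z]
    (φ ψ : Z → ℝ)
    (hφ0 : ∀ z, 0 ≤ φ z) (hφ1 : ∑ z, φ z = 1)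
    (hψ0 : ∀ z, 0 ≤ ψ z) (hψ1 : ∑ z, ψ z = 1)
    (hac : ∀ z, ψ z = 0 → φ z = 0)
    {Z0 : Type*} [MeasurableSpace Z0]
    (μ₀ : Measure Z0) [IsProbabilityMeasure μ₀]
    (loss : Z0 → Z → ℝ)
    (hloss_meas : ∀ z, Measurable fun z0 => loss z0 z)
    (hloss : ∀ z0 z, loss z0 z ∈ Set.Ioo (0 : ℝ) 1)
    (M : ℕ) (hM : 2 ≤ M)
    (Zv : Fin M → Z0)
    (hRM : (1 / (M : ℝ)) * ∑ v, ∑ z, φ z * loss (Zv v) z ∈ Set.Ioo (0 : ℝ) 1) :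
    (M : ℝ) * klBin ((1 / (M : ℝ)) * ∑ v, ∑ z, φ z * loss (Zv v) z)
        (∫ z0, ∑ z, φ z * loss z0 z ∂μ₀)
      ≤ (∑ z, φ z * Real.log (φ z / ψ z))
        + Real.log (∑ z, ψ z *
            Real.exp ((M : ℝ) *
              klBin ((1 / (M : ℝ)) * ∑ v, loss (Zv v) z) (∫ z0, loss z0 z ∂μ₀))) :=
  pacBayes_change_of_measure_general φ ψ hφ0 hφ1 hψ0 hac μ₀ loss hloss_meas hloss M Zv
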